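/- arXiv:1906.09780 — 2 statements merged into one kernel-verified Lean document; each statement's English description precedes it below -/
import Mathlib

section
/- Let q be a prime power and let v, k, d, m be integers with d even, 2 ≤ d ≤ 2k, and k ≤ m ≤ v − k. Then A_q(v,d;k) ≥ A_q(m,d;k) · q^{(v−m)(k−d/2+1)} + A_q(v−m, d; k) (the linkage construction). -/
/-- The subspace distance between two subspaces:
`d_s(U,W) = dim(U+W) - dim(U∩W)`. -/
noncomputable def subspaceDist {F V : Type*} [Field F] [AddCommGroup V] [Module F V]
    (U W : Submodule F V) : ℕ :=
  Module.finrank F ↥(U ⊔ W) - Module.finrank F ↥(U ⊓ W)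

/-- `C` is a constant dimension code of `k`-spaces in `F^v` with minimum
subspace distance at least `d`. -/
def IsCDCode (F : Type*) [Field F] (v k d : ℕ)
    (C : Finset (Submodule F (Fin v → F))) : Prop :=
  (∀ U ∈ C, Module.finrank F ↥U = k) ∧
  (∀ U ∈ C, ∀ U' ∈ C, U ≠ U' → d ≤ subspaceDist U U')

/-- `A_q(v,d;k)`: the maximum cardinality of a constant dimension code of
`k`-spaces in `F^v` with minimum subspace distance at least `d`. -/
noncomputable def Aq (F : Type*) [Field F] (v d k : ℕ) : ℕ :=
  sSup {n | ∃ C : Finset (Submodule F (Fin v → F)), C.card = n ∧ IsCDCode F v k d C}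

/-- `B_q(v1,v2,d;k)`: the maximum cardinality of a constant dimension code of
`k`-spaces in `F^{v1}` with minimum subspace distance at least `d` such that some
`v2`-space `W` intersects every codeword in dimension at least `d/2`. -/
noncomputable def Bq (F : Type*) [Field F] (v1 v2 d k : ℕ) : ℕ :=
  sSup {n | ∃ (C : Finset (Submodule F (Fin v1 → F))) (W : Submodule F (Fin v1 → F)),
    C.card = n ∧ IsCDCode F v1 k d C ∧ Module.finrank F ↥W = v2 ∧
    (∀ U ∈ C, d / 2 ≤ Module.finrank F ↥(U ⊓ W))}

/-- The Gaussian binomial coefficient `[a choose b]_q`. -/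
noncomputable def gaussBinom (q : ℚ) (a b : ℕ) : ℚ :=
  ∏ i ∈ Finset.range b, (q ^ (a - b + i + 1) - 1) / (q ^ (i + 1) - 1)

/-- The row space of the matrix `(I_k | A)`, viewed as a subspace of `F^v`. -/
noncomputable def rowSpanAug (F : Type*) [Field F] (k v : ℕ) (h : k ≤ v)
    (A : Matrix (Fin k) (Fin (v - k)) F) : Submodule F (Fin v → F) :=
  Submodule.span F (Set.range fun i : Fin k =>
    Fin.append ((1 : Matrix (Fin k) (Fin k) F) i) (A i) ∘ Fin.cast (Nat.add_sub_cancel' h).symm)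

/-!
Let `δ = d/2` and `n = v - m`. Take optimal codes `C₁` in `F^m` and `C₂` in `F^n`. Every
`U ∈ C₁` is lifted to the graphs `{(x, f x) : x ∈ U}` of the `q^{n(k-δ+1)}` linear maps
`f : U → F^n` of a Gabidulin code: after identifying `F^n` with `𝔽_{q^n}` these are the
linearized polynomials `∑_{i ≤ k-δ} aᵢ x^{q^i}` precomposed with an embedding of `U`. Two such
maps differ by a nonzero linearized polynomial of `q`-degree at most `k-δ`, whose kernel has at
most `q^{k-δ}` elements, so two graphs over the same `U` meet in dimension at most `k-δ`; graphs
over different `U, U'` meet in at most `dim (U ∩ U') ≤ k-δ`. Together with `{0} × C₂`, which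
meets every graph trivially, this is a code in `F^m × F^n ≅ F^v` of the required size and
minimum distance `2δ`.
-/

open Module

section Linearized

open Polynomial

variable {F K : Type*} [Field F] [Fintype F] [Field K] [Algebra F K]

noncomputable def linearizedMap {s : ℕ} (a : Fin s → K) : K →ₗ[F] K :=
  ∑ i, LinearMap.mulLeft F (a i) ∘ₗ ((FiniteField.frobeniusAlgHom F K) ^ (i : ℕ)).toLinearMap

theorem linearizedMap_apply {s : ℕ} (a : Fin s → K) (x : K) :
    linearizedMap (F := F) a x = ∑ i, a i * x ^ Fintype.card F ^ (i : ℕ) := by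
  simp [linearizedMap, FiniteField.coe_frobeniusAlgHom, pow_iterate]

theorem linearizedMap_sub {s : ℕ} (a b : Fin s → K) :
    linearizedMap (F := F) (a - b) = linearizedMap a - linearizedMap b := by
  ext x
  simp [linearizedMap_apply, sub_mul, Finset.sum_sub_distrib]

theorem finrank_ker_linearizedMap_le [Finite K] {s : ℕ} {a : Fin (s + 1) → K} (ha : a ≠ 0) :
    finrank F (LinearMap.ker (linearizedMap (F := F) a)) ≤ s := by
  classical
  have : Fintype K := Fintype.ofFinite K
  set q := Fintype.card F
  have hq : 1 < q := Fintype.one_lt_card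
  set P : K[X] := ∑ i, C (a i) * X ^ q ^ (i : ℕ)
  have hcoeff (i : Fin (s + 1)) : P.coeff (q ^ (i : ℕ)) = a i := by
    simp only [P, finsetSum_coeff, coeff_C_mul_X_pow,
      (Nat.pow_right_injective hq).eq_iff, Fin.val_inj]
    simp
  have hP : P ≠ 0 := by
    obtain ⟨i, hi⟩ := Function.ne_iff.mp ha
    exact fun h => hi (by simpa [h] using (hcoeff i).symm)
  have hdeg : P.natDegree ≤ q ^ s :=
    natDegree_sum_le_of_forall_le _ _ fun i _ =>
      (natDegree_C_mul_X_pow_le _ _).trans (Nat.pow_le_pow_right hq.le (Fin.is_le i))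
  set Z := (LinearMap.ker (linearizedMap (F := F) a) : Set K).toFinset
  have hroots : Z.val ⊆ P.roots := by
    intro x hx
    simp only [Z, Finset.mem_val, Set.mem_toFinset, SetLike.mem_coe, LinearMap.mem_ker,
      linearizedMap_apply] at hx
    simpa [mem_roots hP, P, eval_finsetSum] using hx
  have hcard : q ^ finrank F (LinearMap.ker (linearizedMap (F := F) a)) ≤ q ^ s := by
    calc _ = Z.card := by
          rw [← card_eq_pow_finrank, Set.toFinset_card]
          exact Fintype.card_congr (Equiv.refl _)
      _ ≤ P.natDegree := card_le_degree_of_subset_roots hroots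
      _ ≤ q ^ s := hdeg
  exact (Nat.pow_le_pow_iff_right hq).mp hcard

end Linearized

theorem exists_linearMap_family_finrank_ker_sub_le (F : Type*) [Field F] [Fintype F]
    {U W : Type*} [AddCommGroup U] [Module F U] [AddCommGroup W] [Module F W]
    [FiniteDimensional F U] [FiniteDimensional F W] (h : finrank F U ≤ finrank F W) (s : ℕ) :
    ∃ f : (Fin (s + 1) → W) → U →ₗ[F] W,
      Pairwise fun a b => finrank F (LinearMap.ker (f a - f b)) ≤ s := by
  set n := finrank F W
  rcases Nat.eq_zero_or_pos n with hn | hn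
  · exact ⟨0, fun _ _ _ => (Submodule.finrank_le _).trans (by omega)⟩
  have : NeZero n := ⟨hn.ne'⟩
  have : Fact (ringChar F).Prime := ⟨CharP.char_is_prime F _⟩
  let K := FiniteField.Extension F (ringChar F) n
  let κ : K ≃ₗ[F] W := .ofFinrankEq _ _ (FiniteField.finrank_extension F _ n)
  obtain ⟨g, hg⟩ := (finrank_le_iff_exists_linearMap (R := F) (M := U) (M' := K)).mp
    (by rwa [FiniteField.finrank_extension])
  refine ⟨fun a => κ.toLinearMap ∘ₗ linearizedMap (κ.symm ∘ a) ∘ₗ g, fun a b hab => ?_⟩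
  have hne : κ.symm ∘ a - κ.symm ∘ b ≠ 0 :=
    sub_ne_zero.mpr fun h => hab (funext fun i => κ.symm.injective (congrFun h i))
  dsimp only
  rw [← LinearMap.comp_sub, ← LinearMap.sub_comp, LinearEquiv.ker_comp, ← linearizedMap_sub]
  exact (LinearMap.finrank_le_finrank_of_injective (f := g.restrict fun _ hx => hx)
    fun x y hxy => Subtype.ext (hg (congrArg Subtype.val hxy))).trans
      (finrank_ker_linearizedMap_le hne)

namespace LinearPMap

variable {K E F : Type*} [DivisionRing K] [AddCommGroup E] [Module K E] [AddCommGroup F]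
  [Module K F]

theorem finrank_map_fst_of_le_graph {f : E →ₗ.[K] F} {P : Submodule K (E × F)}
    (hP : P ≤ f.graph) : finrank K (P.map (LinearMap.fst K E F)) = finrank K P := by
  rw [← LinearMap.range_domRestrict]
  refine LinearMap.finrank_range_of_inj fun z z' h => ?_
  change (z : E × F).1 = (z' : E × F).1 at h
  exact Subtype.ext (Prod.ext h (f.mem_graph_snd_inj' (hP z.2) (hP z'.2) h))

theorem finrank_graph (f : E →ₗ.[K] F) : finrank K f.graph = finrank K f.domain := by
  rw [← finrank_map_fst_of_le_graph le_rfl, graph_map_fst_eq_domain]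

theorem map_fst_graph_inf_graph_le (f g : E →ₗ.[K] F) :
    (f.graph ⊓ g.graph).map (LinearMap.fst K E F) ≤ f.eqLocus g := by
  rintro _ ⟨⟨a, b⟩, ⟨hf, hg⟩, rfl⟩
  obtain ⟨⟨x, hx⟩, rfl, rfl⟩ := (mem_graph_iff f).mp hf
  obtain ⟨⟨y, hy⟩, rfl : y = x, hgy⟩ := (mem_graph_iff g).mp hg
  exact ⟨hx, hy, hgy.symm⟩

theorem finrank_graph_inf_graph_le [FiniteDimensional K E] (f g : E →ₗ.[K] F) :
    finrank K ↥(f.graph ⊓ g.graph) ≤ finrank K (f.eqLocus g) := by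
  rw [← finrank_map_fst_of_le_graph (f := f) inf_le_left]
  exact Submodule.finrank_mono (map_fst_graph_inf_graph_le f g)

theorem eqLocus_le_domain_inf_domain (f g : E →ₗ.[K] F) : f.eqLocus g ≤ f.domain ⊓ g.domain :=
  fun _ ⟨hf, hg, _⟩ => ⟨hf, hg⟩

theorem eqLocus_mk_mk (U : Submodule K E) (φ ψ : U →ₗ[K] F) :
    eqLocus ⟨U, φ⟩ ⟨U, ψ⟩ = (LinearMap.ker (φ - ψ)).map U.subtype := by
  ext x
  simp [eqLocus, sub_eq_zero]

theorem finrank_eqLocus_mk_le [FiniteDimensional K E] (U : Submodule K E) (φ ψ : U →ₗ[K] F) :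
    finrank K (eqLocus ⟨U, φ⟩ ⟨U, ψ⟩) ≤ finrank K (LinearMap.ker (φ - ψ)) := by
  rw [eqLocus_mk_mk]
  exact Submodule.finrank_map_le _ _

theorem disjoint_graph_range_inr (f : E →ₗ.[K] F) :
    Disjoint f.graph (LinearMap.range (LinearMap.inr K E F)) := by
  rw [Submodule.disjoint_def]
  rintro ⟨x, y⟩ hf ⟨w, hw⟩
  obtain rfl : x = 0 := congrArg Prod.fst hw.symm
  simp [f.graph_fst_eq_zero_snd hf rfl]

end LinearPMap

section SubspaceDist

variable {F V W : Type*} [Field F] [AddCommGroup V] [Module F V] [AddCommGroup W] [Module F W]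

theorem Submodule.finrank_map_of_injective {f : V →ₗ[F] W} (hf : Function.Injective f)
    (U : Submodule F V) : finrank F (U.map f) = finrank F U :=
  (Submodule.equivMapOfInjective f hf U).finrank_eq.symm

theorem subspaceDist_self (U : Submodule F V) : subspaceDist U U = 0 := by
  rw [subspaceDist, sup_idem, inf_idem, Nat.sub_self]

theorem subspaceDist_map {f : V →ₗ[F] W} (hf : Function.Injective f) (U U' : Submodule F V) :
    subspaceDist (U.map f) (U'.map f) = subspaceDist U U' := by
  rw [subspaceDist, subspaceDist, ← Submodule.map_sup, ← Submodule.map_inf f hf,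
    Submodule.finrank_map_of_injective hf, Submodule.finrank_map_of_injective hf]

theorem two_mul_le_subspaceDist_iff [FiniteDimensional F V] {U U' : Submodule F V} {k : ℕ}
    (hU : finrank F U = k) (hU' : finrank F U' = k) (δ : ℕ) :
    2 * δ ≤ subspaceDist U U' ↔ finrank F ↥(U ⊓ U') + δ ≤ k := by
  have := Submodule.finrank_sup_add_finrank_inf_eq U U'
  have := Submodule.finrank_mono (inf_le_left : U ⊓ U' ≤ U)
  rw [subspaceDist]
  omega

end SubspaceDist

section Codes

variable {F : Type*} [Field F] [Fintype F]

theorem bddAbove_card_isCDCode (v d k : ℕ) :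
    BddAbove {n | ∃ C : Finset (Submodule F (Fin v → F)), C.card = n ∧ IsCDCode F v k d C} := by
  have : Finite (Submodule F (Fin v → F)) := .of_injective _ SetLike.coe_injective
  have : Fintype (Submodule F (Fin v → F)) := .ofFinite _
  refine ⟨Fintype.card (Submodule F (Fin v → F)), ?_⟩
  rintro _ ⟨C, rfl, -⟩
  exact C.card_le_univ

theorem exists_isCDCode_card_eq_Aq (v d k : ℕ) :
    ∃ C : Finset (Submodule F (Fin v → F)), C.card = Aq F v d k ∧ IsCDCode F v k d C := by
  have hne :
      {n | ∃ C : Finset (Submodule F (Fin v → F)), C.card = n ∧ IsCDCode F v k d C}.Nonempty :=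
    ⟨0, ∅, rfl, by simp [IsCDCode]⟩
  exact Nat.sSup_mem hne (bddAbove_card_isCDCode v d k)

theorem card_le_Aq {V ι : Type*} [AddCommGroup V] [Module F V] [FiniteDimensional F V]
    [Fintype ι] {v d k : ℕ} (hV : finrank F V = v) (hd : 0 < d) (Φ : ι → Submodule F V)
    (hΦ : ∀ i, finrank F (Φ i) = k) (hdist : Pairwise fun i j => d ≤ subspaceDist (Φ i) (Φ j)) :
    Fintype.card ι ≤ Aq F v d k := by
  classical
  let e : V ≃ₗ[F] (Fin v → F) := .ofFinrankEq _ _ (by simpa using hV)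
  let Ψ i := (Φ i).map e.toLinearMap
  have hΨ : Pairwise fun i j => d ≤ subspaceDist (Ψ i) (Ψ j) := fun i j hij => by
    simpa only [Ψ, subspaceDist_map e.injective] using hdist hij
  have hΨinj : Function.Injective Ψ := fun i j h => by
    by_contra hij
    have : d ≤ subspaceDist (Ψ i) (Ψ j) := hΨ hij
    rw [h, subspaceDist_self] at this
    omega
  refine le_csSup (bddAbove_card_isCDCode v d k) ⟨Finset.univ.image Ψ, ?_, ?_, ?_⟩
  · rw [Finset.card_image_of_injective _ hΨinj, Finset.card_univ]
  · simp only [Finset.mem_image, Finset.mem_univ, true_and, forall_exists_index,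
      forall_apply_eq_imp_iff, Ψ, LinearEquiv.finrank_map_eq, hΦ, implies_true]
  · simp only [Finset.mem_image, Finset.mem_univ, true_and, forall_exists_index,
      forall_apply_eq_imp_iff]
    exact fun i j hij => hΨ fun h => hij (congrArg Ψ h)

end Codes

section Linkage

variable {F V W ι₁ ι₂ A : Type*} [Field F] [AddCommGroup V] [Module F V] [AddCommGroup W]
  [Module F W] {U₁ : ι₁ → Submodule F V} {U₂ : ι₂ → Submodule F W}

def linkage (U₁ : ι₁ → Submodule F V) (U₂ : ι₂ → Submodule F W) (f : ∀ i, A → U₁ i →ₗ[F] W) :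
    (ι₁ × A) ⊕ ι₂ → Submodule F (V × W)
  | .inl (i, a) => LinearPMap.graph ⟨U₁ i, f i a⟩
  | .inr j => (U₂ j).map (LinearMap.inr F V W)

variable {f : ∀ i, A → U₁ i →ₗ[F] W} {k : ℕ}

theorem finrank_linkage (hU₁ : ∀ i, finrank F (U₁ i) = k) (hU₂ : ∀ j, finrank F (U₂ j) = k) :
    ∀ x, finrank F (linkage U₁ U₂ f x) = k
  | .inl (i, _) => (LinearPMap.finrank_graph _).trans (hU₁ i)
  | .inr j => (Submodule.finrank_map_of_injective LinearMap.inr_injective _).trans (hU₂ j)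

theorem pairwise_two_mul_le_subspaceDist_linkage [FiniteDimensional F V] [FiniteDimensional F W]
    {δ : ℕ} (hδ : δ ≤ k) (hU₁ : ∀ i, finrank F (U₁ i) = k) (hU₂ : ∀ j, finrank F (U₂ j) = k)
    (h₁ : Pairwise fun i i' => 2 * δ ≤ subspaceDist (U₁ i) (U₁ i'))
    (h₂ : Pairwise fun j j' => 2 * δ ≤ subspaceDist (U₂ j) (U₂ j'))
    (hf : ∀ i, Pairwise fun a b => finrank F (LinearMap.ker (f i a - f i b)) + δ ≤ k) :
    Pairwise fun x y => 2 * δ ≤ subspaceDist (linkage U₁ U₂ f x) (linkage U₁ U₂ f y) := by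
  have hdim := finrank_linkage (f := f) hU₁ hU₂
  have hmixed (i a j) :
      finrank F ↥(linkage U₁ U₂ f (.inl (i, a)) ⊓ linkage U₁ U₂ f (.inr j)) = 0 := by
    rw [linkage, linkage, ((LinearPMap.disjoint_graph_range_inr _).mono_right
      (LinearMap.map_le_range (f := LinearMap.inr F V W))).eq_bot, finrank_bot]
  rintro (⟨i, a⟩ | j) (⟨i', b⟩ | j') hxy <;>
    rw [two_mul_le_subspaceDist_iff (hdim _) (hdim _)]
  · refine (Nat.add_le_add_right (LinearPMap.finrank_graph_inf_graph_le _ _) δ).trans ?_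
    by_cases hi : i = i'
    · subst hi
      have hab : a ≠ b := fun h => hxy (h ▸ rfl)
      exact (Nat.add_le_add_right (LinearPMap.finrank_eqLocus_mk_le _ _ _) δ).trans (hf i hab)
    · have hU : finrank F ↥(U₁ i ⊓ U₁ i') + δ ≤ k :=
        (two_mul_le_subspaceDist_iff (hU₁ i) (hU₁ i') δ).mp (h₁ hi)
      exact (Nat.add_le_add_right (Submodule.finrank_mono
        (LinearPMap.eqLocus_le_domain_inf_domain _ _)) δ).trans hU
  · rw [hmixed]; omega
  · rw [inf_comm, hmixed]; omega
  · have hj : j ≠ j' := fun h => hxy (h ▸ rfl)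
    rw [← two_mul_le_subspaceDist_iff (hdim _) (hdim _)]
    simpa only [linkage, subspaceDist_map (f := LinearMap.inr F V W) LinearMap.inr_injective]
      using h₂ hj

end Linkage

theorem stmt_12_general (q : ℕ) (F : Type) [Field F] [Fintype F] (hq : Fintype.card F = q)
    (v k d m : ℕ) (hdeven : 2 ∣ d) (hd2 : 2 ≤ d) (hdk : d ≤ 2 * k)
    (hmv : m + k ≤ v) :
    Aq F m d k * q ^ ((v - m) * (k - d / 2 + 1)) + Aq F (v - m) d k ≤ Aq F v d k := by
  obtain ⟨δ, rfl⟩ := hdeven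
  rw [Nat.mul_div_cancel_left δ two_pos]
  set n := v - m
  obtain ⟨C₁, hC₁card, hC₁dim, hC₁dist⟩ := exists_isCDCode_card_eq_Aq (F := F) m (2 * δ) k
  obtain ⟨C₂, hC₂card, hC₂dim, hC₂dist⟩ := exists_isCDCode_card_eq_Aq (F := F) n (2 * δ) k
  have hdim₁ (U : C₁) : finrank F (U : Submodule F (Fin m → F)) = k := hC₁dim U U.2
  have hdim₂ (U : C₂) : finrank F (U : Submodule F (Fin n → F)) = k := hC₂dim U U.2
  have hMRD (U : C₁) := exists_linearMap_family_finrank_ker_sub_le F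
    (U := (U : Submodule F (Fin m → F))) (W := Fin n → F)
    (by rw [hdim₁, finrank_fin_fun]; omega) (k - δ)
  choose f hf using hMRD
  have key := card_le_Aq (v := v) (by simp only [finrank_prod, finrank_fin_fun]; omega) (by omega)
    (linkage (fun U : C₁ => (U : Submodule F (Fin m → F)))
      (fun U : C₂ => (U : Submodule F (Fin n → F))) f)
    (finrank_linkage hdim₁ hdim₂)
    (pairwise_two_mul_le_subspaceDist_linkage (by omega) hdim₁ hdim₂
      (fun U U' h => hC₁dist U U.2 U' U'.2 (Subtype.coe_ne_coe.mpr h))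
      (fun U U' h => hC₂dist U U.2 U' U'.2 (Subtype.coe_ne_coe.mpr h))
      (fun U a b hab => by have := hf U hab; omega))
  simpa [hC₁card, hC₂card, hq, ← pow_mul, mul_comm] using key

/-- the linkage construction:
`A_q(v,d;k) ≥ A_q(m,d;k) * q^{(v-m)(k-d/2+1)} + A_q(v-m, d; k)`. -/
theorem stmt_12 (q : ℕ) (F : Type) [Field F] [Fintype F] (hq : Fintype.card F = q)
    (v k d m : ℕ) (hdeven : 2 ∣ d) (hd2 : 2 ≤ d) (hdk : d ≤ 2 * k)
    (hkm : k ≤ m) (hmv : m + k ≤ v) :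
    Aq F m d k * q ^ ((v - m) * (k - d / 2 + 1)) + Aq F (v - m) d k ≤ Aq F v d k :=
  stmt_12_general q F hq v k d m hdeven hd2 hdk hmv
end

section
/- Let q be a prime power. For every odd integer v ≥ 3, A_q(v,4;2) ≥ 1 + q^3 + q^5 + ... + q^{v−2} (where the sum of odd powers q^3, q^5, ..., q^{v−2} is empty for v = 3). -/
open Module

section PartialSpread

variable {F : Type*} [Field F]

theorem exists_submodule_finrank_eq {V : Type*} [AddCommGroup V] [Module F V]
    [FiniteDimensional F V] {k : ℕ} (hk : k ≤ finrank F V) :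
    ∃ U : Submodule F V, finrank F U = k := by
  let b := finBasis F V
  refine ⟨Submodule.span F (Set.range (b ∘ Fin.castLE hk)), ?_⟩
  rw [finrank_span_eq_card (b.linearIndependent.comp _ (Fin.castLE_injective hk)),
    Fintype.card_fin]

variable {V V' : Type*} [AddCommGroup V] [Module F V] [AddCommGroup V'] [Module F V']

def IsPartialSpread (k : ℕ) (S : Finset (Submodule F V)) : Prop :=
  (∀ U ∈ S, finrank F U = k) ∧ (S : Set (Submodule F V)).Pairwise Disjoint

theorem isPartialSpread_singleton {k : ℕ} {U : Submodule F V} (hU : finrank F U = k) :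
    IsPartialSpread k {U} :=
  ⟨by simpa using hU, by simp⟩

theorem IsPartialSpread.image_map {k : ℕ} {S : Finset (Submodule F V)}
    (hS : IsPartialSpread k S) {f : V →ₗ[F] V'} (hf : Function.Injective f) :
    IsPartialSpread k (S.image (Submodule.map f)) := by
  refine ⟨?_, ?_⟩
  · simp only [Finset.mem_image, forall_exists_index, and_imp, forall_apply_eq_imp_iff₂]
    intro U hU
    rw [← hS.1 U hU]
    exact (Submodule.equivMapOfInjective f hf U).finrank_eq.symm
  · rw [Finset.coe_image]
    exact Set.Pairwise.image fun U hU U' hU' hne => Submodule.disjoint_map hf (hS.2 hU hU' hne)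

theorem IsPartialSpread.isCDCode {v k : ℕ} {S : Finset (Submodule F (Fin v → F))}
    (hS : IsPartialSpread k S) : IsCDCode F v k (2 * k) S := by
  refine ⟨hS.1, fun U hU U' hU' hne => ?_⟩
  have hdisj : U ⊓ U' = ⊥ := (hS.2 hU hU' hne).eq_bot
  have hdim := Submodule.finrank_sup_add_finrank_inf_eq U U'
  rw [hdisj, finrank_bot, hS.1 U hU, hS.1 U' hU'] at hdim
  rw [subspaceDist, hdisj, finrank_bot]
  omega

end PartialSpread

section Graph

variable {R M N : Type*} [Ring R] [AddCommGroup M] [Module R M] [AddCommGroup N] [Module R N]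

theorem LinearMap.disjoint_graph_graph {f g : M →ₗ[R] N} (hfg : Function.Injective (f - g)) :
    Disjoint f.graph g.graph := by
  refine Submodule.disjoint_def.2 fun x hf hg => ?_
  rw [LinearMap.mem_graph_iff] at hf hg
  have hx₁ : x.1 = 0 := hfg (by simp [← hf, ← hg])
  ext
  · exact hx₁
  · simp [hf, hx₁]

theorem LinearMap.disjoint_graph_map_inr (f : M →ₗ[R] N) (U : Submodule R N) :
    Disjoint f.graph (U.map (LinearMap.inr R M N)) := by
  refine Submodule.disjoint_def.2 fun x hf ⟨u, _, hu⟩ => ?_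
  subst hu
  simp_all [LinearMap.mem_graph_iff]

theorem LinearMap.finrank_graph {K : Type*} [DivisionRing K] [Module K M] [Module K N]
    (f : M →ₗ[K] N) : finrank K f.graph = finrank K M := by
  rw [LinearMap.graph_eq_range_prod, LinearMap.finrank_range_of_inj]
  exact fun x y h => congrArg Prod.fst h

end Graph

section Construction

variable {F K : Type*} [Field F] [Field K] [Algebra F K]

def mulGraph (W : Submodule F K) (a : K) : Submodule F (W × K) :=
  (LinearMap.mulRight F a ∘ₗ W.subtype).graph

theorem finrank_mulGraph (W : Submodule F K) (a : K) :
    finrank F (mulGraph W a) = finrank F W :=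
  LinearMap.finrank_graph _

theorem disjoint_mulGraph (W : Submodule F K) {a b : K} (hab : a ≠ b) :
    Disjoint (mulGraph W a) (mulGraph W b) := by
  refine LinearMap.disjoint_graph_graph fun w w' h => Subtype.ext ?_
  have h' : (w : K) * (a - b) = w' * (a - b) := by
    simpa [mul_sub] using h
  exact mul_right_cancel₀ (sub_ne_zero.2 hab) h'

theorem IsPartialSpread.exists_prod [Finite K] {k : ℕ} (hk : k ≠ 0) {W : Submodule F K}
    (hW : finrank F W = k) {S : Finset (Submodule F K)} (hS : IsPartialSpread k S) :
    ∃ T : Finset (Submodule F (W × K)), T.card = Nat.card K + S.card ∧ IsPartialSpread k T := by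
  classical
  have := Fintype.ofFinite K
  have hne : ∀ a, mulGraph W a ≠ ⊥ := fun a h => hk <| by
    rw [← hW, ← finrank_mulGraph W a, h, finrank_bot]
  have hinj : Function.Injective (mulGraph W) := fun a b h => by
    by_contra hab
    have hdisj := disjoint_mulGraph W hab
    rw [h, disjoint_self] at hdisj
    exact hne b hdisj
  let graphs := Finset.univ.image (mulGraph W)
  let lifted := S.image (Submodule.map (LinearMap.inr F W K))
  have hlifted : IsPartialSpread k lifted := hS.image_map LinearMap.inr_injective
  have hcross : ∀ L ∈ graphs, ∀ U ∈ lifted, Disjoint L U := by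
    simp only [graphs, lifted, Finset.mem_image, Finset.mem_univ, true_and]
    rintro _ ⟨a, rfl⟩ _ ⟨U, -, rfl⟩
    exact LinearMap.disjoint_graph_map_inr _ U
  refine ⟨graphs ∪ lifted, ?_, ?_, ?_⟩
  · rw [Finset.card_union_of_disjoint, Finset.card_image_of_injective _ hinj,
      Finset.card_image_of_injective _ (Submodule.map_injective_of_injective
        LinearMap.inr_injective), Finset.card_univ, Nat.card_eq_fintype_card]
    refine Finset.disjoint_left.2 fun L hL hL' => ?_
    obtain ⟨a, -, rfl⟩ := Finset.mem_image.1 hL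
    exact hne a (disjoint_self.1 (hcross _ hL _ hL'))
  · simp only [Finset.mem_union]
    rintro U (hU | hU)
    · obtain ⟨a, -, rfl⟩ := Finset.mem_image.1 hU
      rw [finrank_mulGraph, hW]
    · exact hlifted.1 U hU
  · rw [Finset.coe_union, Set.pairwise_union_of_symm]
    refine ⟨?_, hlifted.2, fun L hL U hU _ => hcross L hL U hU⟩
    rw [Finset.coe_image]
    exact Set.Pairwise.image fun a _ b _ hab => disjoint_mulGraph W hab

end Construction

theorem exists_partialSpread_two (F : Type*) [Field F] [Finite F] (t : ℕ) {V : Type}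
    [AddCommGroup V] [Module F V] [FiniteDimensional F V] (hV : finrank F V = 2 * t + 3) :
    ∃ S : Finset (Submodule F V),
      S.card = 1 + ∑ i ∈ Finset.range t, Nat.card F ^ (2 * i + 3) ∧ IsPartialSpread 2 S := by
  induction t generalizing V with
  | zero =>
    obtain ⟨U, hU⟩ := exists_submodule_finrank_eq (show 2 ≤ finrank F V by omega)
    exact ⟨{U}, by simp, isPartialSpread_singleton hU⟩
  | succ t ih =>
    obtain ⟨p, _⟩ := CharP.exists F
    have := Fact.mk (CharP.char_is_prime F p)
    have := NeZero.mk (n := 2 * t + 3) (by omega)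
    let K := FiniteField.Extension F p (2 * t + 3)
    have hK : finrank F K = 2 * t + 3 := FiniteField.finrank_extension F p _
    obtain ⟨W, hW⟩ := exists_submodule_finrank_eq (show 2 ≤ finrank F K by omega)
    obtain ⟨S, hScard, hS⟩ := ih hK
    obtain ⟨T, hTcard, hT⟩ := hS.exists_prod two_ne_zero hW
    let e : (W × K) ≃ₗ[F] V := LinearEquiv.ofFinrankEq _ _ <| by
      rw [finrank_prod, hW, hK, hV]
      ring
    refine ⟨T.image (Submodule.map (e : (W × K) →ₗ[F] V)), ?_, hT.image_map e.injective⟩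
    rw [Finset.card_image_of_injective _ (Submodule.map_injective_of_injective e.injective),
      hTcard, hScard, FiniteField.natCard_extension, Finset.sum_range_succ]
    ring

theorem IsCDCode.card_le_Aq {F : Type*} [Field F] [Finite F] {v k d : ℕ}
    {C : Finset (Submodule F (Fin v → F))} (hC : IsCDCode F v k d C) : C.card ≤ Aq F v d k := by
  have : Finite (Submodule F (Fin v → F)) := Finite.of_injective _ SetLike.coe_injective
  have := Fintype.ofFinite (Submodule F (Fin v → F))
  refine le_csSup ⟨Fintype.card (Submodule F (Fin v → F)), ?_⟩ ⟨C, rfl, hC⟩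
  rintro _ ⟨C', rfl, -⟩
  exact C'.card_le_univ

/-- for odd `v ≥ 3`, `A_q(v,4;2) ≥ 1 + q^3 + q^5 + ... + q^{v-2}`. -/
theorem stmt_15 (q : ℕ) (F : Type) [Field F] [Fintype F] (hq : Fintype.card F = q)
    (v : ℕ) (hv : 3 ≤ v) (hvodd : Odd v) :
    1 + ∑ i ∈ Finset.range ((v - 3) / 2), q ^ (2 * i + 3) ≤ Aq F v 4 2 := by
  obtain ⟨t, rfl⟩ : ∃ t, v = 2 * t + 3 := by
    obtain ⟨k, rfl⟩ := hvodd
    exact ⟨k - 1, by omega⟩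
  obtain ⟨S, hScard, hS⟩ := exists_partialSpread_two F t (V := Fin (2 * t + 3) → F)
    (finrank_fin_fun F)
  have ht : (2 * t + 3 - 3) / 2 = t := by omega
  rw [ht, ← hq, ← Nat.card_eq_fintype_card, ← hScard]
  exact hS.isCDCode.card_le_Aq
end
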